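/- arXiv:2211.00570 — 3 statements merged into one kernel-verified Lean document; each statement's English description precedes it below -/
import Mathlib

section
/- Let r ≥ 1 be an integer and τ ∈ ℂ with Im τ > 0. Let ρ : ℤ → ℂ be such that for every z ∈ ℂ the family m ↦ ρ(m)·exp(2πi·m·z) is absolutely summable, and define g(z) = Σ_{m∈ℤ} ρ(m)·exp(2πi·m·z). Suppose that g(z + n·τ) = exp(−(2r+1)·π·i·(τ·n² + 2n·z))·g(z) for all z ∈ ℂ and all n ∈ ℤ. Then for all m, n ∈ ℤ one has ρ(m + (2r+1)·n) = exp(π·i·τ·n·(2m + (2r+1)·n))·ρ(m). In particular, the sequence (ρ(m))_{m∈ℤ} is determined by ρ(0), …, ρ(2r). -/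
/-!
Restricted to real `z = x`, both sides of the quasi-periodicity relation for a fixed `n` are
absolutely convergent Fourier series in `x`: the left one has coefficients `ρ(m) e^{2πi m n τ}`,
the right one, after the shift `m ↦ m + (2r+1)n` absorbs the factor `e^{-2(2r+1)πi n x}`, has
coefficients `e^{-(2r+1)πi τ n²} ρ(m + (2r+1)n)`. Absolutely summable Fourier coefficients are
determined by the sum (integrate term by term against `e^{-2πi k x}` over the circle), so the two
coefficient sequences agree.
-/

open Complex MeasureTheory AddCircle

theorem fourierCoeff_tsum_smul_fourier {T : ℝ} [Fact (0 < T)] {c : ℤ → ℂ}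
    (hc : Summable (‖c ·‖)) (n : ℤ) :
    fourierCoeff (fun x : AddCircle T => ∑' m, c m • fourier m x) n = c n := by
  have hint (m : ℤ) : Integrable (fun x : AddCircle T => fourier (-n) x • c m • fourier m x)
      haarAddCircle :=
    Continuous.integrable_of_hasCompactSupport (by fun_prop) (.of_compactSpace _)
  have hnorm (m : ℤ) :
      ∫ x : AddCircle T, ‖fourier (-n) x • c m • fourier m x‖ ∂haarAddCircle = ‖c m‖ := by
    simp [Circle.norm_coe]
  calc fourierCoeff (fun x : AddCircle T => ∑' m, c m • fourier m x) n
      = ∫ x : AddCircle T, ∑' m, fourier (-n) x • c m • fourier m x ∂haarAddCircle := by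
        simp only [fourierCoeff, smul_eq_mul, tsum_mul_left]
    _ = ∑' m, c m • fourierCoeff (T := T) (fourier m) n := by
        rw [← integral_tsum_of_summable_integral_norm hint (by simpa only [hnorm])]
        simp only [fourierCoeff, smul_comm (fourier (-n) _), integral_smul]
    _ = c n := by
        simp [fourierCoeff_fourier, Pi.single_apply]

theorem eq_of_tsum_mul_exp_eq {c d : ℤ → ℂ} (hc : Summable (‖c ·‖)) (hd : Summable (‖d ·‖))
    (h : ∀ x : ℝ, ∑' m : ℤ, c m * exp (2 * Real.pi * I * m * x)
      = ∑' m : ℤ, d m * exp (2 * Real.pi * I * m * x)) :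
    c = d := by
  have : Fact ((0 : ℝ) < 1) := ⟨one_pos⟩
  funext n
  rw [← fourierCoeff_tsum_smul_fourier (T := 1) hc, ← fourierCoeff_tsum_smul_fourier (T := 1) hd]
  congr 1
  funext x
  induction x using QuotientAddGroup.induction_on with
  | H x => simpa only [fourier_coe_apply, ofReal_one, div_one, smul_eq_mul] using h x

theorem mul_exp_eq_exp_mul_of_tsum_quasiperiodic {ρ : ℤ → ℂ} {w A : ℂ} {K : ℤ}
    (h₀ : Summable (‖ρ ·‖)) (hw : Summable fun m : ℤ => ‖ρ m * exp (2 * Real.pi * I * m * w)‖)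
    (h : ∀ x : ℝ, ∑' m : ℤ, ρ m * exp (2 * Real.pi * I * m * (x + w))
      = exp (A - 2 * Real.pi * I * K * x) * ∑' m : ℤ, ρ m * exp (2 * Real.pi * I * m * x))
    (m : ℤ) :
    ρ m * exp (2 * Real.pi * I * m * w) = exp A * ρ (m + K) := by
  have hshift : Summable fun m => ‖exp A * ρ (m + K)‖ := by
    simpa only [norm_mul, Function.comp_def] using
      (h₀.comp_injective (add_left_injective K)).mul_left ‖exp A‖
  refine congrFun (eq_of_tsum_mul_exp_eq hw hshift fun x => ?_) m
  calc ∑' m : ℤ, ρ m * exp (2 * Real.pi * I * m * w) * exp (2 * Real.pi * I * m * x)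
      = exp (A - 2 * Real.pi * I * K * x) * ∑' m : ℤ, ρ m * exp (2 * Real.pi * I * m * x) := by
        rw [← h]
        congr 1 with m
        rw [mul_assoc, ← exp_add]
        congr 2; ring
    _ = ∑' j : ℤ, exp A * ρ j * exp (2 * Real.pi * I * (j - K) * x) := by
        rw [← tsum_mul_left]
        congr 1 with j
        rw [mul_left_comm, ← exp_add, mul_comm (exp A), mul_assoc (ρ j), ← exp_add]
        congr 2; ring
    _ = ∑' m : ℤ, exp A * ρ (m + K) * exp (2 * Real.pi * I * m * x) := by
        rw [← (Equiv.addRight K).tsum_eq]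
        simp only [Equiv.coe_addRight, Int.cast_add, add_sub_cancel_right]

theorem statement7_general (r : ℕ) (τ : ℂ) (ρ : ℤ → ℂ)
    (hsum : ∀ z : ℂ,
      Summable (fun m : ℤ => ‖ρ m * Complex.exp (2 * Real.pi * Complex.I * (m : ℂ) * z)‖))
    (hg : ∀ (z : ℂ) (n : ℤ),
      (∑' m : ℤ, ρ m * Complex.exp (2 * Real.pi * Complex.I * (m : ℂ) * (z + (n : ℂ) * τ)))
        = Complex.exp (-((2 * (r : ℂ) + 1) * Real.pi * Complex.I *
              (τ * (n : ℂ) ^ 2 + 2 * (n : ℂ) * z)))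
          * ∑' m : ℤ, ρ m * Complex.exp (2 * Real.pi * Complex.I * (m : ℂ) * z)) :
    ∀ m n : ℤ,
      ρ (m + (2 * (r : ℤ) + 1) * n)
        = Complex.exp (Real.pi * Complex.I * τ * (n : ℂ) *
            (2 * (m : ℂ) + (2 * (r : ℂ) + 1) * (n : ℂ))) * ρ m := by
  intro m n
  set A : ℂ := -((2 * (r : ℂ) + 1) * Real.pi * I * (τ * (n : ℂ) ^ 2))
  have key := mul_exp_eq_exp_mul_of_tsum_quasiperiodic (w := n * τ) (A := A)
    (K := (2 * (r : ℤ) + 1) * n) (by simpa using hsum 0) (hsum _)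
    (fun x => by rw [hg]; congr 2; push_cast; ring) m
  calc ρ (m + (2 * (r : ℤ) + 1) * n)
      = exp (-A) * (exp A * ρ (m + (2 * (r : ℤ) + 1) * n)) := by
        rw [← mul_assoc, ← exp_add, neg_add_cancel, exp_zero, one_mul]
    _ = exp (-A) * (ρ m * exp (2 * Real.pi * I * m * (n * τ))) := by rw [key]
    _ = _ := by
        rw [mul_left_comm, ← exp_add, mul_comm]
        congr 2
        ring

/-- if `g(z) = Σ_{m∈ℤ} ρ(m)·exp(2πi·m·z)` (an absolutely
summable series) satisfies the quasi-periodicity relation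
`g(z + n·τ) = exp(−(2r+1)·π·i·(τ·n² + 2n·z))·g(z)` for all `z ∈ ℂ`, `n ∈ ℤ`,
then `ρ(m + (2r+1)·n) = exp(π·i·τ·n·(2m + (2r+1)·n))·ρ(m)` for all `m, n ∈ ℤ`. -/
theorem statement7 (r : ℕ) (hr : 1 ≤ r) (τ : ℂ) (hτ : 0 < τ.im) (ρ : ℤ → ℂ)
    (hsum : ∀ z : ℂ,
      Summable (fun m : ℤ => ‖ρ m * Complex.exp (2 * Real.pi * Complex.I * (m : ℂ) * z)‖))
    (hg : ∀ (z : ℂ) (n : ℤ),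
      (∑' m : ℤ, ρ m * Complex.exp (2 * Real.pi * Complex.I * (m : ℂ) * (z + (n : ℂ) * τ)))
        = Complex.exp (-((2 * (r : ℂ) + 1) * Real.pi * Complex.I *
              (τ * (n : ℂ) ^ 2 + 2 * (n : ℂ) * z)))
          * ∑' m : ℤ, ρ m * Complex.exp (2 * Real.pi * Complex.I * (m : ℂ) * z)) :
    ∀ m n : ℤ,
      ρ (m + (2 * (r : ℤ) + 1) * n)
        = Complex.exp (Real.pi * Complex.I * τ * (n : ℂ) *
            (2 * (m : ℂ) + (2 * (r : ℂ) + 1) * (n : ℂ))) * ρ m :=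
  statement7_general r τ ρ hsum hg
end

section
/- Let r ≥ 1 be an integer and τ ∈ ℂ with Im τ > 0. The set of entire functions g : ℂ → ℂ (differentiable everywhere in the complex sense) satisfying g(z+1) = g(z) and g(z+τ) = exp(−(2r+1)·π·i·(τ + 2z))·g(z) for all z ∈ ℂ is a complex vector subspace of the space of functions ℂ → ℂ, and its dimension over ℂ equals 2r+1. (This is the dimension count dim ℋ_{r+1/2}(j,δ) = 2r+1 for the space of holomorphic sections of L^r ⊗ L^{1/2} ⊗ δ over the torus.) -/
/-!
An entire `1`-periodic function is determined by its Fourier coefficients `c_k` on `[0, 1]`, and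
by Cauchy's theorem these do not change when the segment is moved to `[0, 1] + τ`. For `g` in the
space, quasi-periodicity then gives `c_k = exp(-πinτ - 2πikτ) c_{k+n}` (here `n = 2r + 1`), so `g`
is determined by `c_0, …, c_{n-1}`. Conversely, the theta functions with characteristics
`θ_j(z) = exp(πiτj²/n + 2πijz) θ(nz + jτ, nτ)`, `0 ≤ j < n`, lie in the space and satisfy
`c_k(θ_j) = δ_jk exp(πiτj²/n)`, so `g ↦ (c_0, …, c_{n-1})` is an isomorphism onto `ℂⁿ`.
-/

open Complex MeasureTheory Set Filter Function Topology
open scoped Real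

noncomputable section

def unitFourierCoeff (g : ℂ → ℂ) (k : ℤ) : ℂ :=
  ∫ t in (0:ℝ)..1, cexp (-(2 * π * I * k * t)) * g t

lemma integral_exp_two_pi_I_intCast_mul (N : ℤ) :
    ∫ t in (0:ℝ)..1, cexp (2 * π * I * N * t) = if N = 0 then 1 else 0 := by
  split_ifs with hN
  · simp [hN]
  have hc : 2 * π * I * N ≠ 0 := by simp [Real.pi_ne_zero, hN]
  rw [integral_exp_mul_complex hc]
  have h1 : cexp (2 * π * I * N) = 1 := by
    rw [← exp_int_mul_two_pi_mul_I N]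
    ring_nf
  simp [h1]

lemma unitFourierCoeff_add {g h : ℂ → ℂ} (hg : Continuous g) (hh : Continuous h) (k : ℤ) :
    unitFourierCoeff (g + h) k = unitFourierCoeff g k + unitFourierCoeff h k := by
  simp only [unitFourierCoeff, Pi.add_apply, mul_add]
  exact intervalIntegral.integral_add (Continuous.intervalIntegrable (by fun_prop) _ _)
    (Continuous.intervalIntegrable (by fun_prop) _ _)

lemma unitFourierCoeff_smul (c : ℂ) (g : ℂ → ℂ) (k : ℤ) :
    unitFourierCoeff (c • g) k = c * unitFourierCoeff g k := by
  simp only [unitFourierCoeff, Pi.smul_apply, smul_eq_mul, mul_left_comm _ c,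
    intervalIntegral.integral_const_mul]

lemma unitFourierCoeff_eq_tsum_of_hasSum {ι : Type*} [Countable ι] {a : ι → ℂ} {ν : ι → ℤ}
    (ha : Summable fun m => ‖a m‖) {g : ℂ → ℂ}
    (hg : ∀ t : ℝ, HasSum (fun m => a m * cexp (2 * π * I * ν m * t)) (g t)) (k : ℤ) :
    unitFourierCoeff g k = ∑' m, if ν m = k then a m else 0 := by
  set F : ι → ℝ → ℂ := fun m t => a m * cexp (2 * π * I * (ν m - k : ℤ) * t)
  have hF : ∀ t : ℝ, cexp (-(2 * π * I * k * t)) * g t = ∑' m, F m t := by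
    intro t
    rw [← (hg t).tsum_eq, ← tsum_mul_left]
    refine tsum_congr fun m => ?_
    rw [mul_left_comm, ← Complex.exp_add]
    congr 2
    push_cast
    ring
  have hnorm : ∀ m t, ‖F m t‖ = ‖a m‖ := fun m t => by
    rw [norm_mul, show 2 * π * I * (ν m - k : ℤ) * (t : ℂ) =
      ((2 * π * (ν m - k : ℤ) * t : ℝ) : ℂ) * I by push_cast; ring, norm_exp_ofReal_mul_I, mul_one]
  have hsum : Summable fun m => ∫ t in Ioc (0:ℝ) 1, ‖F m t‖ := by
    simpa [hnorm] using ha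
  rw [unitFourierCoeff, intervalIntegral.integral_congr fun t _ => hF t,
    intervalIntegral.integral_of_le zero_le_one,
    ← integral_tsum_of_summable_integral_norm
      (fun m => (by fun_prop : Continuous (F m)).integrableOn_Ioc) hsum]
  refine tsum_congr fun m => ?_
  rw [← intervalIntegral.integral_of_le zero_le_one, intervalIntegral.integral_const_mul,
    integral_exp_two_pi_I_intCast_mul]
  simp only [sub_eq_zero]
  split_ifs <;> simp

lemma Differentiable.eq_zero_of_forall_mem_Ioo {g : ℂ → ℂ} (hg : Differentiable ℂ g) {a b : ℝ}
    (hab : a < b) (h : ∀ t ∈ Ioo a b, g t = 0) : g = 0 := by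
  set c : ℝ := (a + b) / 2
  have hc : Ioo a b ∈ 𝓝 c := Ioo_mem_nhds (by simp only [c]; linarith) (by simp only [c]; linarith)
  have hofReal : Tendsto ofReal (𝓝[≠] c) (𝓝[≠] (c : ℂ)) :=
    continuous_ofReal.continuousWithinAt.tendsto_nhdsWithin fun t ht => by simpa using ht
  have hfreq : ∃ᶠ z in 𝓝[≠] (c : ℂ), g z = 0 :=
    hofReal.frequently ((eventually_nhdsWithin_of_eventually_nhds hc).mono h).frequently
  exact funext fun z => (hg.differentiableOn.analyticOnNhd isOpen_univ)
    |>.eqOn_zero_of_preconnected_of_frequently_eq_zero isPreconnected_univ (mem_univ _) hfreq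
    (mem_univ z)

lemma Differentiable.eq_zero_of_unitFourierCoeff_eq_zero {g : ℂ → ℂ} (hg : Differentiable ℂ g)
    (hper : Periodic g 1) (h : ∀ k, unitFourierCoeff g k = 0) : g = 0 := by
  have : Fact ((0:ℝ) < 1) := ⟨one_pos⟩
  let F : C(AddCircle (1:ℝ), ℂ) := ⟨AddCircle.liftIco 1 0 fun t : ℝ => g t,
    AddCircle.liftIco_zero_continuous (by simpa using (hper 0).symm)
      (hg.continuous.comp continuous_ofReal).continuousOn⟩
  have hcoeff : fourierCoeff F = 0 := funext fun k => by
    rw [Pi.zero_apply, ← h k, show ⇑F = AddCircle.liftIco 1 0 fun t : ℝ => g t from rfl,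
      fourierCoeff_liftIco_eq, fourierCoeffOn_eq_integral, unitFourierCoeff]
    simp only [sub_zero, zero_add, div_one, one_smul, fourier_coe_apply, smul_eq_mul,
      Int.cast_neg, mul_neg, neg_mul, ofReal_one]
  refine hg.eq_zero_of_forall_mem_Ioo zero_lt_one fun t ht => ?_
  have hsum := has_pointwise_sum_fourier_series_of_summable
    (by rw [hcoeff]; exact summable_zero) (t : AddCircle (1:ℝ))
  simp only [hcoeff, Pi.zero_apply, zero_smul] at hsum
  rw [← AddCircle.liftIco_zero_coe_apply (f := fun t : ℝ => g t) (Ioo_subset_Ico_self ht)]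
  exact hsum.unique hasSum_zero

lemma intervalIntegral_comp_add_eq_of_periodic {G : ℂ → ℂ} (hG : Differentiable ℂ G)
    (hper : Periodic G 1) (w : ℂ) :
    ∫ t in (0:ℝ)..1, G (t + w) = ∫ t in (0:ℝ)..1, G t := by
  have hline : Periodic (fun t : ℝ => G (t + w.im * I)) 1 := fun t => by
    simpa [add_right_comm] using hper (t + w.im * I)
  have hre : ∫ t in (0:ℝ)..1, G (t + w) = ∫ t in (0:ℝ)..1, G (t + w.im * I) := by
    calc ∫ t in (0:ℝ)..1, G (t + w) = ∫ t in (0:ℝ)..1, G (↑(t + w.re) + w.im * I) := by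
          simp only [ofReal_add, add_assoc, re_add_im]
      _ = ∫ t in (0 + w.re)..(1 + w.re), G (t + w.im * I) :=
          intervalIntegral.integral_comp_add_right (fun t : ℝ => G (t + w.im * I)) w.re
      _ = ∫ t in (0:ℝ)..1, G (t + w.im * I) := by
          simpa [add_comm] using hline.intervalIntegral_add_eq w.re 0
  -- Cauchy on the rectangle `[0, 1] × [0, Im w]`, whose vertical sides cancel by periodicity.
  have hrect := integral_boundary_rect_eq_zero_of_differentiableOn G 0 (1 + w.im * I)
    hG.differentiableOn
  have hside : ∫ y in (0:ℝ)..w.im, G (1 + y * I) = ∫ y in (0:ℝ)..w.im, G (y * I) :=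
    intervalIntegral.integral_congr fun y _ => by simpa [add_comm] using hper (y * I)
  simp only [zero_re, zero_im, add_re, one_re, mul_re, ofReal_re, ofReal_im, I_re, I_im,
    add_im, one_im, mul_im, mul_zero, sub_zero, mul_one, zero_add, add_zero, ofReal_zero,
    zero_mul, ofReal_one] at hrect
  rw [hside] at hrect
  rw [hre]
  linear_combination -hrect

/-- Mumford's space of theta functions of level `n`. -/
def thetaSpace (n : ℕ) (τ : ℂ) : Submodule ℂ (ℂ → ℂ) where
  carrier := {g | Differentiable ℂ g ∧ Periodic g 1 ∧
    ∀ z, g (z + τ) = cexp (-(n * π * I * (τ + 2 * z))) * g z}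
  add_mem' := fun ⟨hf, hf₁, hfτ⟩ ⟨hg, hg₁, hgτ⟩ =>
    ⟨hf.add hg, hf₁.add hg₁, fun z => by simp only [Pi.add_apply, hfτ, hgτ, mul_add]⟩
  zero_mem' := ⟨differentiable_const 0, fun _ => rfl, fun _ => by simp⟩
  smul_mem' c _ := fun ⟨hg, hg₁, hgτ⟩ =>
    ⟨hg.const_smul c, hg₁.smul c, fun z => by simp only [Pi.smul_apply, hgτ, smul_eq_mul]; ring⟩

namespace thetaSpace

variable {n : ℕ} {τ : ℂ} {g : ℂ → ℂ}

lemma unitFourierCoeff_eq_mul_unitFourierCoeff_add (hg : g ∈ thetaSpace n τ) (k : ℤ) :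
    unitFourierCoeff g k =
      cexp (-(π * I * n * τ) - 2 * π * I * k * τ) * unitFourierCoeff g (k + n) := by
  obtain ⟨hg, hg₁, hgτ⟩ := hg
  set G : ℂ → ℂ := fun z => cexp (-(2 * π * I * k * z)) * g z
  have hG : Differentiable ℂ G := by fun_prop
  have hG₁ : Periodic G 1 := fun z => by
    simp only [G, hg₁ z]
    rw [show -(2 * π * I * k * (z + 1)) = -(2 * π * I * k * z) + (-k : ℤ) * (2 * π * I) by
      push_cast; ring, exp_add, exp_int_mul_two_pi_mul_I, mul_one]
  rw [unitFourierCoeff, ← intervalIntegral_comp_add_eq_of_periodic hG hG₁ τ, unitFourierCoeff,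
    ← intervalIntegral.integral_const_mul]
  refine intervalIntegral.integral_congr fun t _ => ?_
  simp only [G, hgτ]
  rw [← mul_assoc, ← mul_assoc, ← exp_add, ← exp_add]
  congr 2
  push_cast
  ring

lemma eq_zero_of_unitFourierCoeff_eq_zero (hn : 0 < n) (hg : g ∈ thetaSpace n τ)
    (h : ∀ k : ℤ, 0 ≤ k → k < n → unitFourierCoeff g k = 0) : g = 0 := by
  have hP : Periodic (fun k : ℤ => unitFourierCoeff g k = 0) n := fun k => by
    simp only [unitFourierCoeff_eq_mul_unitFourierCoeff_add hg k, mul_eq_zero, exp_ne_zero,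
      false_or]
  refine hg.1.eq_zero_of_unitFourierCoeff_eq_zero hg.2.1 fun k => ?_
  have hk := hP.int_mul (k / n) (k % n)
  simp only [Int.cast_id, Int.emod_add_ediv_mul] at hk
  rw [hk]
  exact h _ (Int.emod_nonneg _ (by omega)) (Int.emod_lt_of_pos _ (by omega))

end thetaSpace

lemma im_natCast_mul_pos {n : ℕ} {τ : ℂ} (hn : 0 < n) (hτ : 0 < τ.im) :
    0 < ((n : ℂ) * τ).im := by
  simpa using mul_pos (Nat.cast_pos.2 hn) hτ

/-- Mumford's `θ[j/n, 0](n z, n τ)`. -/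
def thetaChar (n : ℕ) (τ : ℂ) (j : ℤ) (z : ℂ) : ℂ :=
  cexp (π * I * τ * j ^ 2 / n + 2 * π * I * j * z) * jacobiTheta₂ (n * z + j * τ) (n * τ)

section thetaChar

variable {n : ℕ} {τ : ℂ}

lemma differentiable_thetaChar (hn : 0 < n) (hτ : 0 < τ.im) (j : ℤ) :
    Differentiable ℂ (thetaChar n τ j) := fun z =>
  (differentiableAt_exp.comp z (by fun_prop)).mul <|
    (differentiableAt_jacobiTheta₂_fst _ (im_natCast_mul_pos hn hτ)).comp z (by fun_prop)

lemma thetaChar_periodic (j : ℤ) : Periodic (thetaChar n τ j) 1 := fun z => by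
  have hθ : Periodic (jacobiTheta₂ · (n * τ)) 1 := fun w => jacobiTheta₂_add_left w _
  rw [thetaChar, thetaChar, show (n : ℂ) * (z + 1) + j * τ = n * z + j * τ + n * 1 by ring,
    show π * I * τ * j ^ 2 / n + 2 * π * I * j * (z + 1) =
      π * I * τ * j ^ 2 / n + 2 * π * I * j * z + j * (2 * π * I) by ring,
    exp_add, exp_int_mul_two_pi_mul_I, mul_one]
  exact congrArg _ (hθ.nat_mul n _)

lemma thetaChar_add (j : ℤ) (z : ℂ) :
    thetaChar n τ j (z + τ) = cexp (-(n * π * I * (τ + 2 * z))) * thetaChar n τ j z := by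
  rw [thetaChar, thetaChar, show (n : ℂ) * (z + τ) + j * τ = n * z + j * τ + n * τ by ring,
    jacobiTheta₂_add_left', ← mul_assoc, ← mul_assoc, ← exp_add, ← exp_add]
  congr 2
  ring

lemma thetaChar_mem_thetaSpace (hn : 0 < n) (hτ : 0 < τ.im) (j : ℤ) :
    thetaChar n τ j ∈ thetaSpace n τ :=
  ⟨differentiable_thetaChar hn hτ j, thetaChar_periodic j, thetaChar_add j⟩

lemma hasSum_thetaChar (hn : 0 < n) (hτ : 0 < τ.im) (j : ℤ) (z : ℂ) :
    HasSum (fun m : ℤ => cexp (π * I * τ * j ^ 2 / n) * jacobiTheta₂_term m (j * τ) (n * τ) *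
      cexp (2 * π * I * (m * n + j : ℤ) * z)) (thetaChar n τ j z) := by
  refine ((hasSum_jacobiTheta₂_term _ (im_natCast_mul_pos hn hτ)).mul_left _).congr_fun
    fun m => ?_
  simp only [jacobiTheta₂_term, ← exp_add]
  congr 1
  push_cast
  ring

lemma unitFourierCoeff_thetaChar (hn : 0 < n) (hτ : 0 < τ.im) {j k : ℤ} (hj : 0 ≤ j)
    (hjn : j < n) (hk : 0 ≤ k) (hkn : k < n) :
    unitFourierCoeff (thetaChar n τ j) k = if k = j then cexp (π * I * τ * j ^ 2 / n) else 0 := by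
  have hsum : Summable fun m : ℤ =>
      ‖cexp (π * I * τ * j ^ 2 / n) * jacobiTheta₂_term m (j * τ) (n * τ)‖ := by
    simp only [norm_mul]
    exact (summable_norm_iff.2
      (hasSum_jacobiTheta₂_term _ (im_natCast_mul_pos hn hτ)).summable).mul_left _
  have hfreq : ∀ m : ℤ, m * n + j = k ↔ m = 0 ∧ k = j := fun m => by
    refine ⟨fun h => ?_, fun ⟨hm, hkj⟩ => by simp [hm, hkj]⟩
    have hkj : k - j = 0 :=
      Int.eq_zero_of_abs_lt_dvd (m := n) ⟨m, by rw [← h]; ring⟩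
        (abs_sub_lt_iff.2 ⟨by omega, by omega⟩)
    exact ⟨(mul_eq_zero.1 (by omega : m * n = 0)).resolve_right (by omega), by omega⟩
  rw [unitFourierCoeff_eq_tsum_of_hasSum hsum fun t => hasSum_thetaChar hn hτ j t]
  simp_rw [hfreq]
  split_ifs with hkj <;> simp [hkj, jacobiTheta₂_term]

end thetaChar

namespace thetaSpace

variable {n : ℕ} {τ : ℂ}

variable (n τ) in
def coeffMap : thetaSpace n τ →ₗ[ℂ] (Fin n → ℂ) where
  toFun g i := unitFourierCoeff g (i : ℕ)
  map_add' g h := funext fun _ => unitFourierCoeff_add g.2.1.continuous h.2.1.continuous _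
  map_smul' c g := funext fun _ => unitFourierCoeff_smul c g _

lemma coeffMap_injective (hn : 0 < n) : Injective (coeffMap n τ) := by
  refine (injective_iff_map_eq_zero _).2 fun g hg => Subtype.ext ?_
  refine eq_zero_of_unitFourierCoeff_eq_zero hn g.2 fun k hk hkn => ?_
  simpa [coeffMap, Int.toNat_of_nonneg hk] using congrFun hg ⟨k.toNat, by omega⟩

lemma coeffMap_thetaChar (hn : 0 < n) (hτ : 0 < τ.im) (j : Fin n) :
    coeffMap n τ ⟨thetaChar n τ (j : ℕ), thetaChar_mem_thetaSpace hn hτ _⟩ =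
      cexp (π * I * τ * (j : ℕ) ^ 2 / n) • Pi.single j 1 := funext fun i => by
  simp [coeffMap, unitFourierCoeff_thetaChar hn hτ (Int.natCast_nonneg j) (by omega)
    (Int.natCast_nonneg i) (by omega), Pi.single_apply, Fin.ext_iff]

lemma coeffMap_surjective (hn : 0 < n) (hτ : 0 < τ.im) : Surjective (coeffMap n τ) := by
  rw [← LinearMap.range_eq_top, eq_top_iff, ← (Pi.basisFun ℂ (Fin n)).span_eq, Submodule.span_le]
  rintro _ ⟨j, rfl⟩
  refine ⟨(cexp (π * I * τ * (j : ℕ) ^ 2 / n))⁻¹ •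
    ⟨thetaChar n τ (j : ℕ), thetaChar_mem_thetaSpace hn hτ _⟩, ?_⟩
  rw [map_smul, coeffMap_thetaChar hn hτ, smul_smul, inv_mul_cancel₀ (exp_ne_zero _), one_smul,
    Pi.basisFun_apply]

end thetaSpace

lemma finrank_thetaSpace {n : ℕ} {τ : ℂ} (hn : 0 < n) (hτ : 0 < τ.im) :
    Module.finrank ℂ (thetaSpace n τ) = n :=
  (LinearEquiv.ofBijective _ ⟨thetaSpace.coeffMap_injective hn,
    thetaSpace.coeffMap_surjective hn hτ⟩).finrank_eq.trans (Module.finrank_fin_fun ℂ)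

end

theorem statement8_general (r : ℕ) (τ : ℂ) (hτ : 0 < τ.im) :
    ∃ W : Submodule ℂ (ℂ → ℂ),
      ((W : Set (ℂ → ℂ)) =
        {g : ℂ → ℂ | Differentiable ℂ g ∧ (∀ z : ℂ, g (z + 1) = g z) ∧
          ∀ z : ℂ, g (z + τ) =
            Complex.exp (-((2 * (r : ℂ) + 1) * Real.pi * Complex.I * (τ + 2 * z))) * g z})
      ∧ Module.finrank ℂ W = 2 * r + 1 := by
  refine ⟨thetaSpace (2 * r + 1) τ, ?_, finrank_thetaSpace (by omega) hτ⟩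
  ext g
  simp [thetaSpace, Periodic]

/-- the set of entire functions `g : ℂ → ℂ` with `g(z+1) = g(z)`
and `g(z+τ) = exp(−(2r+1)·π·i·(τ + 2z))·g(z)` is a complex vector subspace of
`ℂ → ℂ` of dimension `2r+1` (the dimension count `dim ℋ_{r+1/2}(j,δ) = 2r+1`). -/
theorem statement8 (r : ℕ) (hr : 1 ≤ r) (τ : ℂ) (hτ : 0 < τ.im) :
    ∃ W : Submodule ℂ (ℂ → ℂ),
      ((W : Set (ℂ → ℂ)) =
        {g : ℂ → ℂ | Differentiable ℂ g ∧ (∀ z : ℂ, g (z + 1) = g z) ∧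
          ∀ z : ℂ, g (z + τ) =
            Complex.exp (-((2 * (r : ℂ) + 1) * Real.pi * Complex.I * (τ + 2 * z))) * g z})
      ∧ Module.finrank ℂ W = 2 * r + 1 :=
  statement8_general r τ hτ
end

section
/- (Abstract form of Theorem 3.8) Let n ≥ 1 be an integer and let E be a finite-dimensional complex inner product space with dim_ℂ E = n. Let U, V : E → E be unitary linear maps satisfying U(V(w)) = exp(2πi/n)·V(U(w)) for all w ∈ E. Suppose v ∈ E is a unit vector with U(v) = λ₀·v for some λ₀ ∈ ℂ. Then: (1) for every natural number l, U(V^l(v)) = exp(2πi·l/n)·λ₀·V^l(v); (2) the family (V^l(v))_{l=0,…,n−1} is orthonormal; (3) this family is a basis of E. In particular U has n distinct eigenvalues exp(2πi·l/n)·λ₀, l = 0,…,n−1. -/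
/-!
Writing `ζ = exp(2πi/n)`, the commutation relation `U V = ζ V U` makes `V` shift the eigenspaces
of `U`: `V^l v` is an eigenvector with eigenvalue `ζ^l λ₀`. Since `ζ` is a primitive `n`-th root of
unity and `λ₀ ≠ 0`, the eigenvalues `ζ^l λ₀`, `0 ≤ l < n`, are pairwise distinct; eigenvectors of
an isometry for distinct eigenvalues are orthogonal, and `V` preserves norms, so the `V^l v` are
`n` orthonormal vectors in an `n`-dimensional space, hence a basis.
-/

open Complex

theorem Module.End.apply_pow_apply_eq_pow_mul_smul {R M : Type*} [CommSemiring R]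
    [AddCommMonoid M] [Module R M] {U V : Module.End R M} {c μ : R}
    (hcomm : ∀ w, U (V w) = c • V (U w)) {v : M} (hv : U v = μ • v) (l : ℕ) :
    U ((V ^ l) v) = (c ^ l * μ) • (V ^ l) v := by
  induction l with
  | zero => simpa using hv
  | succ l ih =>
    rw [pow_succ' V, Module.End.mul_apply, hcomm, ih, map_smul, smul_smul, pow_succ', mul_assoc]

theorem norm_pow_apply_of_norm_map {R E : Type*} [Semiring R] [SeminormedAddCommGroup E]
    [Module R E] {T : Module.End R E} (hT : ∀ x, ‖T x‖ = ‖x‖) (k : ℕ) (x : E) :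
    ‖(T ^ k) x‖ = ‖x‖ := by
  induction k with
  | zero => rfl
  | succ k ih => rw [pow_succ', Module.End.mul_apply, hT, ih]

theorem norm_eq_one_of_norm_map_of_apply_eq_smul {𝕜 E : Type*} [NormedField 𝕜]
    [NormedAddCommGroup E] [NormedSpace 𝕜 E] {T : Module.End 𝕜 E} (hT : ∀ x, ‖T x‖ = ‖x‖)
    {x : E} {a : 𝕜} (hx : T x = a • x) (hx0 : x ≠ 0) : ‖a‖ = 1 := by
  have h : ‖a‖ * ‖x‖ = 1 * ‖x‖ := by rw [← norm_smul, ← hx, one_mul, hT]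
  exact mul_right_cancel₀ (norm_ne_zero_iff.mpr hx0) h

theorem inner_eq_zero_of_inner_map_map_of_apply_eq_smul {𝕜 E : Type*} [RCLike 𝕜]
    [NormedAddCommGroup E] [InnerProductSpace 𝕜 E] {T : Module.End 𝕜 E}
    (hT : ∀ x y, inner 𝕜 (T x) (T y) = inner 𝕜 x y) {x y : E} {a b : 𝕜}
    (hx : T x = a • x) (hy : T y = b • y) (hx0 : x ≠ 0) (hab : a ≠ b) : inner 𝕜 x y = 0 := by
  have hconj : starRingEnd 𝕜 a * a = 1 := by
    rw [RCLike.conj_mul, norm_eq_one_of_norm_map_of_apply_eq_smul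
      ((LinearMap.norm_map_iff_inner_map_map T).mpr hT) hx hx0]
    simp
  have hxy := hT x y
  rw [hx, hy, inner_smul_left, inner_smul_right, ← mul_assoc] at hxy
  by_contra hne
  have hb : starRingEnd 𝕜 a * b = starRingEnd 𝕜 a * a := by
    rw [hconj]; exact mul_right_cancel₀ hne (hxy.trans (one_mul _).symm)
  exact hab (mul_left_cancel₀ (left_ne_zero_of_mul_eq_one hconj) hb).symm

theorem Complex.exp_two_pi_I_mul_natCast_div (l n : ℕ) :
    exp (2 * Real.pi * I * l / n) = exp (2 * Real.pi * I / n) ^ l := by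
  rw [← exp_nat_mul]; ring_nf

/-- abstract form of Theorem 3.8: if `U, V` are unitary
endomorphisms of an `n`-dimensional complex inner product space `E` with
`U∘V = exp(2πi/n)·V∘U`, and `v` is a unit eigenvector of `U` with eigenvalue
`λ₀`, then the `V^l v` are eigenvectors of `U` with eigenvalues
`exp(2πi·l/n)·λ₀`, and `(V^l v)_{l=0,…,n−1}` is an orthonormal basis of `E`;
in particular `U` has `n` distinct eigenvalues `exp(2πi·l/n)·λ₀`. -/
theorem statement9 (n : ℕ) (hn : 1 ≤ n) (E : Type*) [NormedAddCommGroup E]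
    [InnerProductSpace ℂ E] [FiniteDimensional ℂ E]
    (hdim : Module.finrank ℂ E = n)
    (U V : Module.End ℂ E)
    (hU : ∀ x y : E, (inner ℂ (U x) (U y) : ℂ) = inner ℂ x y)
    (hV : ∀ x y : E, (inner ℂ (V x) (V y) : ℂ) = inner ℂ x y)
    (hcomm : ∀ w : E, U (V w) = Complex.exp (2 * Real.pi * Complex.I / (n : ℂ)) • V (U w))
    (v : E) (hv : ‖v‖ = 1) (lam₀ : ℂ) (hUv : U v = lam₀ • v) :
    (∀ l : ℕ, U ((V ^ l) v)
        = (Complex.exp (2 * Real.pi * Complex.I * (l : ℂ) / (n : ℂ)) * lam₀) • (V ^ l) v)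
    ∧ Orthonormal ℂ (fun l : Fin n => (V ^ (l : ℕ)) v)
    ∧ Submodule.span ℂ (Set.range (fun l : Fin n => (V ^ (l : ℕ)) v)) = ⊤
    ∧ Function.Injective
        (fun l : Fin n => Complex.exp (2 * Real.pi * Complex.I * ((l : ℕ) : ℂ) / (n : ℂ)) * lam₀)
    ∧ ∀ l : Fin n, Module.End.HasEigenvalue U
        (Complex.exp (2 * Real.pi * Complex.I * ((l : ℕ) : ℂ) / (n : ℂ)) * lam₀) := by
  simp only [exp_two_pi_I_mul_natCast_div]
  set ζ := exp (2 * Real.pi * I / n)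
  have hζ : IsPrimitiveRoot ζ n := isPrimitiveRoot_exp n (by omega)
  have hUn := (LinearMap.norm_map_iff_inner_map_map U).mpr hU
  have hVn := (LinearMap.norm_map_iff_inner_map_map V).mpr hV
  have hnorm (l : ℕ) : ‖(V ^ l) v‖ = 1 := (norm_pow_apply_of_norm_map hVn l v).trans hv
  have hne (l : ℕ) : (V ^ l) v ≠ 0 := norm_ne_zero_iff.mp (by simp [hnorm])
  have hlam₀ : ‖lam₀‖ = 1 := norm_eq_one_of_norm_map_of_apply_eq_smul hUn hUv (by simpa using hne 0)
  have heig := Module.End.apply_pow_apply_eq_pow_mul_smul hcomm hUv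
  have hinj : Function.Injective (fun l : Fin n => ζ ^ (l : ℕ) * lam₀) := fun i j hij =>
    Fin.ext (hζ.pow_inj i.2 j.2 (mul_right_cancel₀ (norm_ne_zero_iff.mp (by simp [hlam₀])) hij))
  have hon : Orthonormal ℂ (fun l : Fin n => (V ^ (l : ℕ)) v) :=
    ⟨fun l => hnorm l, fun i j hij =>
      inner_eq_zero_of_inner_map_map_of_apply_eq_smul hU (heig i) (heig j) (hne i) (hinj.ne hij)⟩
  exact ⟨heig, hon, hon.linearIndependent.span_eq_top_of_card_eq_finrank' (by simp [hdim]), hinj,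
    fun l => Module.End.hasEigenvalue_of_hasEigenvector ⟨Module.End.mem_eigenspace_iff.mpr (heig l),
      hne l⟩⟩
end
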